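/- arXiv:1009.2944 — 7 statements merged into one kernel-verified Lean document; each statement's English description precedes it below -/
import Mathlib

section
/- Let n ≥ 1, let q be a prime dividing g(n), and let p′ and p″ be two primes, with p′, p″, q pairwise distinct and q ≥ p′ + p″. Then p′ divides g(n) or p″ divides g(n). -/
/-- Landau's function: the maximal order of a permutation of the symmetric group on `n` letters. -/
noncomputable def landau (n : ℕ) : ℕ :=
  Finset.univ.sup fun σ : Equiv.Perm (Fin n) => orderOf σ

/-- The largest prime factor of `m` (0 if `m` has no prime factor). -/
def maxPrimeFac (m : ℕ) : ℕ := m.primeFactors.sup id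

/-!
Let `g = landau n` be realised by a permutation whose cycle lengths form the multiset `s`, so
`g = lcm s`, and suppose neither `p₁` nor `p₂` divides `g`. Some cycle length is a multiple
`q * k` of `q`. Choose prime powers `P₁ = p₁ ^ i`, `P₂ = p₂ ^ j` with `P₁ + P₂ ≤ q < P₁ * P₂`,
and replace the cycle of length `q * k` by two cycles of lengths `P₁ * k` and `P₂`; this does not
increase the number of moved points. The new order `L` is at most `g`, while `g ∣ q * L` and
`P₁ * P₂ ∣ L`. As `P₁ * P₂` is coprime to `g`, this gives `g * P₁ * P₂ ≤ q * g`, contradicting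
`q < P₁ * P₂`.
-/

open Equiv

theorem orderOf_le_landau {n : ℕ} (σ : Perm (Fin n)) : orderOf σ ≤ landau n :=
  Finset.le_sup (f := fun σ : Perm (Fin n) => orderOf σ) (Finset.mem_univ σ)

theorem exists_orderOf_eq_landau (n : ℕ) : ∃ σ : Perm (Fin n), orderOf σ = landau n := by
  obtain ⟨σ, -, hσ⟩ := Finset.exists_mem_eq_sup Finset.univ Finset.univ_nonempty
    fun σ : Perm (Fin n) => orderOf σ
  exact ⟨σ, hσ.symm⟩

theorem landau_pos (n : ℕ) : 0 < landau n := by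
  obtain ⟨σ, hσ⟩ := exists_orderOf_eq_landau n
  exact hσ ▸ orderOf_pos σ

theorem Multiset.lcm_le_landau {n : ℕ} {s : Multiset ℕ} (hs : ∀ a ∈ s, 2 ≤ a) (hsum : s.sum ≤ n) :
    s.lcm ≤ landau n := by
  obtain ⟨σ, rfl⟩ := (Perm.exists_with_cycleType_iff (α := Fin n)).mpr
    ⟨by simpa using hsum, hs⟩
  exact σ.lcm_cycleType ▸ orderOf_le_landau σ

theorem exists_multiset_lcm_eq_landau (n : ℕ) :
    ∃ s : Multiset ℕ, (∀ a ∈ s, 2 ≤ a) ∧ s.sum ≤ n ∧ s.lcm = landau n := by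
  obtain ⟨σ, hσ⟩ := exists_orderOf_eq_landau n
  exact ⟨σ.cycleType, fun _ ↦ Perm.two_le_of_mem_cycleType,
    by simpa using σ.sum_cycleType_le, σ.lcm_cycleType.trans hσ⟩

theorem Prime.exists_mem_dvd_of_dvd_lcm {α : Type*} [CommMonoidWithZero α]
    [NormalizedGCDMonoid α] {q : α} (hq : Prime q) {s : Multiset α} (h : q ∣ s.lcm) :
    ∃ m ∈ s, q ∣ m :=
  hq.exists_mem_multiset_dvd <|
    h.trans <| Multiset.lcm_dvd.mpr fun _ hb ↦ Multiset.dvd_prod hb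

theorem Multiset.lcm_dvd_mul_lcm_cons_erase {α : Type*} [CommMonoidWithZero α]
    [NormalizedGCDMonoid α] [DecidableEq α] {s : Multiset α} {q k : α} (hqk : q * k ∈ s) (c : α) :
    s.lcm ∣ q * (c * k ::ₘ s.erase (q * k)).lcm := by
  rw [← Multiset.cons_erase hqk, Multiset.lcm_cons, Multiset.erase_cons_head, Multiset.lcm_cons]
  exact _root_.lcm_dvd (mul_dvd_mul_left q ((dvd_mul_left k c).trans (dvd_lcm_left _ _)))
    ((dvd_lcm_right _ _).trans (dvd_mul_left _ q))

/-- `L` is the order of the permutation obtained from one of maximal order by splitting a cycle of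
length `q * k` into cycles of lengths `a * k` and `b`. -/
theorem exists_le_landau_of_add_le {n q a b : ℕ} (hq : q.Prime) (hqd : q ∣ landau n)
    (ha : 2 ≤ a) (hb : 2 ≤ b) (hab : a + b ≤ q) :
    ∃ L, 0 < L ∧ L ≤ landau n ∧ landau n ∣ q * L ∧ a ∣ L ∧ b ∣ L := by
  obtain ⟨s, hs2, hsn, hsg⟩ := exists_multiset_lcm_eq_landau n
  obtain ⟨_, hm, k, rfl⟩ := Prime.exists_mem_dvd_of_dvd_lcm hq.prime (hsg ▸ hqd)
  have hk : 1 ≤ k := Nat.pos_of_ne_zero fun h ↦ by simpa [h] using hs2 _ hm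
  set t := b ::ₘ a * k ::ₘ s.erase (q * k)
  have ht2 : ∀ x ∈ t, 2 ≤ x := by
    simp only [t, Multiset.mem_cons]
    rintro x (rfl | rfl | hx)
    exacts [hb, le_mul_of_le_of_one_le ha hk, hs2 x (Multiset.mem_of_mem_erase hx)]
  have htn : t.sum ≤ n := by
    have hsplit : a * k + b ≤ q * k := by nlinarith
    have := Multiset.sum_erase hm
    simp only [t, Multiset.sum_cons]
    omega
  refine ⟨t.lcm, Nat.pos_of_ne_zero fun h ↦ ?_, Multiset.lcm_le_landau ht2 htn, ?_, ?_, ?_⟩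
  · simpa using ht2 0 ((Multiset.lcm_eq_zero_iff _).mp h)
  · rw [← hsg, Multiset.lcm_cons]
    exact (Multiset.lcm_dvd_mul_lcm_cons_erase hm a).trans
      (Nat.mul_dvd_mul_left q (dvd_lcm_right _ _))
  · simp only [t, Multiset.lcm_cons]
    exact (dvd_mul_right a k).trans ((dvd_lcm_left _ _).trans (dvd_lcm_right _ _))
  · exact Multiset.dvd_lcm (Multiset.mem_cons_self _ _)

theorem mul_le_of_coprime_landau {n q a b : ℕ} (hq : q.Prime) (hqd : q ∣ landau n)
    (ha : 2 ≤ a) (hb : 2 ≤ b) (hab : a + b ≤ q) (hcop : a.Coprime b)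
    (hcopg : (a * b).Coprime (landau n)) : a * b ≤ q := by
  obtain ⟨L, hL, hLg, hgL, haL, hbL⟩ := exists_le_landau_of_add_le hq hqd ha hb hab
  have hdvd : landau n * (a * b) ∣ q * L :=
    hcopg.symm.mul_dvd_of_dvd_of_dvd hgL ((hcop.mul_dvd_of_dvd_of_dvd haL hbL).mul_left q)
  have := (Nat.le_of_dvd (Nat.mul_pos hq.pos hL) hdvd).trans (Nat.mul_le_mul_left q hLg)
  rw [mul_comm q] at this
  exact Nat.le_of_mul_le_mul_left this (landau_pos n)

theorem exists_pow_add_le_le_pow_mul {a b q : ℕ} (ha : 2 ≤ a) (hab : a < b) (hq : a + b ≤ q) :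
    ∃ i, 0 < i ∧ a ^ i + b ≤ q ∧ q ≤ a ^ i * b := by
  have hi : 0 < Nat.log a (q - b) := Nat.log_pos ha (by omega)
  refine ⟨Nat.log a (q - b), hi, ?_, ?_⟩
  · have := Nat.pow_log_le_self a (x := q - b) (by omega)
    omega
  · have hlt := Nat.lt_pow_succ_log_self ha (q - b)
    have hge : a ≤ a ^ Nat.log a (q - b) := Nat.le_self_pow hi.ne' a
    rw [pow_succ] at hlt
    generalize a ^ Nat.log a (q - b) = x at hlt hge
    have hstep : x * a + b ≤ x * b + 1 := by
      obtain ⟨d, rfl⟩ := Nat.exists_eq_add_of_lt hab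
      obtain ⟨e, rfl⟩ := Nat.exists_eq_add_of_le hge
      nlinarith
    omega

theorem exists_pow_pow_add_le_le_mul {a b q : ℕ} (ha : 2 ≤ a) (hb : 2 ≤ b) (hab : a ≠ b)
    (hq : a + b ≤ q) : ∃ i j, 0 < i ∧ 0 < j ∧ a ^ i + b ^ j ≤ q ∧ q ≤ a ^ i * b ^ j := by
  rcases hab.lt_or_gt with hlt | hlt
  · obtain ⟨i, hi, h⟩ := exists_pow_add_le_le_pow_mul ha hlt hq
    exact ⟨i, 1, hi, one_pos, by simpa using h⟩
  · obtain ⟨j, hj, h₁, h₂⟩ := exists_pow_add_le_le_pow_mul hb hlt (by omega : b + a ≤ q)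
    refine ⟨1, j, one_pos, hj, ?_, ?_⟩
    · rw [pow_one]; omega
    · rw [pow_one, mul_comm]; exact h₂

theorem stmt6_general (n q p₁ p₂ : ℕ) (hq : q.Prime) (hqd : q ∣ landau n)
    (hp₁ : p₁.Prime) (hp₂ : p₂.Prime) (h₁₂ : p₁ ≠ p₂)
    (hsum : p₁ + p₂ ≤ q) :
    p₁ ∣ landau n ∨ p₂ ∣ landau n := by
  by_contra! h
  obtain ⟨i, j, hi, hj, hadd, hmul⟩ :=
    exists_pow_pow_add_le_le_mul hp₁.two_le hp₂.two_le h₁₂ hsum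
  have h₁ : 2 ≤ p₁ ^ i := hp₁.two_le.trans (Nat.le_self_pow hi.ne' p₁)
  have h₂ : 2 ≤ p₂ ^ j := hp₂.two_le.trans (Nat.le_self_pow hj.ne' p₂)
  have hlt : q < p₁ ^ i * p₂ ^ j :=
    hmul.lt_of_ne fun heq ↦ Nat.not_prime_mul (by omega) (by omega) (heq ▸ hq)
  have hcop : (p₁ ^ i).Coprime (p₂ ^ j) := ((Nat.coprime_primes hp₁ hp₂).mpr h₁₂).pow i j
  have hcopg : (p₁ ^ i * p₂ ^ j).Coprime (landau n) :=
    (((hp₁.coprime_iff_not_dvd).mpr h.1).pow_left i).mul_left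
      (((hp₂.coprime_iff_not_dvd).mpr h.2).pow_left j)
  have := mul_le_of_coprime_landau hq hqd h₁ h₂ hadd hcop hcopg
  omega

/-- If q divides g(n) and p₁, p₂, q are pairwise distinct primes with q ≥ p₁ + p₂,
then p₁ or p₂ divides g(n). -/
theorem stmt6 (n q p₁ p₂ : ℕ) (hn : 1 ≤ n) (hq : q.Prime) (hqd : q ∣ landau n)
    (hp₁ : p₁.Prime) (hp₂ : p₂.Prime) (h₁₂ : p₁ ≠ p₂) (h₁q : p₁ ≠ q) (h₂q : p₂ ≠ q)
    (hsum : p₁ + p₂ ≤ q) :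
    p₁ ∣ landau n ∨ p₂ ∣ landau n :=
  stmt6_general n q p₁ p₂ hq hqd hp₁ hp₂ h₁₂ hsum
end

section
/- Let k ≥ 1 be an integer, let x ≥ p_k, and set η = η_k(x). Then for every real y ≥ x, the interval (η·y, y] contains at least k primes; moreover η_k(x) is the greatest real λ such that (λ·y, y] contains at least k primes for every y ≥ x. -/
/-- `eta k x` is η_k(x) = min{ p_{i−k}/p_i : p_i > x } (with 1-based prime indexing;
here `Nat.nth Nat.Prime` is 0-based, so p_i = Nat.nth Nat.Prime (i-1)). -/
noncomputable def eta (k : ℕ) (x : ℝ) : ℝ :=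
  sInf {r : ℝ | ∃ i : ℕ, x < (Nat.nth Nat.Prime (i + k) : ℝ) ∧
    r = (Nat.nth Nat.Prime i : ℝ) / (Nat.nth Nat.Prime (i + k) : ℝ)}

/-- The number of primes p with a < p ≤ b. -/
noncomputable def primeCountIoc (a b : ℝ) : ℕ :=
  {p : ℕ | p.Prime ∧ a < (p : ℝ) ∧ (p : ℝ) ≤ b}.ncard

lemma nthP_strictMono : StrictMono (Nat.nth Nat.Prime) :=
  Nat.nth_strictMono Nat.infinite_setOf_prime

lemma nthP_pos (n : ℕ) : 0 < (Nat.nth Nat.Prime n : ℝ) := by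
  exact_mod_cast (Nat.prime_nth_prime n).pos

lemma exists_lt_nthP (x : ℝ) (k : ℕ) : ∃ i, x < (Nat.nth Nat.Prime (i + k) : ℝ) := by
  refine ⟨⌊x⌋₊ + 1, ?_⟩
  have h1 : x < (⌊x⌋₊ + 1 : ℕ) := by exact_mod_cast Nat.lt_floor_add_one x
  have h3 : ⌊x⌋₊ + 1 + k ≤ Nat.nth Nat.Prime (⌊x⌋₊ + 1 + k) := nthP_strictMono.le_apply
  calc x < ((⌊x⌋₊ + 1 : ℕ) : ℝ) := h1
    _ ≤ (Nat.nth Nat.Prime (⌊x⌋₊ + 1 + k) : ℝ) := by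
        exact_mod_cast le_trans (by omega) h3

lemma etaSet_nonempty (k : ℕ) (x : ℝ) :
    {r : ℝ | ∃ i : ℕ, x < (Nat.nth Nat.Prime (i + k) : ℝ) ∧
      r = (Nat.nth Nat.Prime i : ℝ) / (Nat.nth Nat.Prime (i + k) : ℝ)}.Nonempty := by
  obtain ⟨i, hi⟩ := exists_lt_nthP x k
  exact ⟨_, i, hi, rfl⟩

lemma etaSet_bddBelow (k : ℕ) (x : ℝ) :
    BddBelow {r : ℝ | ∃ i : ℕ, x < (Nat.nth Nat.Prime (i + k) : ℝ) ∧
      r = (Nat.nth Nat.Prime i : ℝ) / (Nat.nth Nat.Prime (i + k) : ℝ)} := by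
  refine ⟨0, ?_⟩
  rintro r ⟨i, -, rfl⟩
  positivity

lemma eta_nonneg (k : ℕ) (x : ℝ) : 0 ≤ eta k x :=
  Real.sInf_nonneg (by rintro r ⟨i, -, rfl⟩; positivity)

/-- The set of primes in a real interval (a, b] is finite. -/
lemma primeSet_finite (a b : ℝ) :
    {p : ℕ | p.Prime ∧ a < (p : ℝ) ∧ (p : ℝ) ≤ b}.Finite := by
  apply (Set.finite_Iic ⌈b⌉₊).subset
  rintro p ⟨-, -, hpb⟩
  exact_mod_cast le_trans hpb (Nat.le_ceil b)

/-- For k ≥ 1 and x ≥ p_k, every interval (η_k(x)·y, y] with y ≥ x contains at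
least k primes, and η_k(x) is the greatest real λ with this property. -/
theorem stmt9 (k : ℕ) (hk : 1 ≤ k) (x : ℝ)
    (hx : (Nat.nth Nat.Prime (k - 1) : ℝ) ≤ x) :
    (∀ y : ℝ, x ≤ y → k ≤ primeCountIoc (eta k x * y) y) ∧
    ∀ l : ℝ, (∀ y : ℝ, x ≤ y → k ≤ primeCountIoc (l * y) y) → l ≤ eta k x := by
  have hη0 := eta_nonneg k x
  constructor
  · intro y hxy
    have hy0 : (0:ℝ) < y := lt_of_lt_of_le (lt_of_lt_of_le (nthP_pos (k-1)) hx) hxy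
    -- find minimal m with y < p_m
    have hex : ∃ n, y < (Nat.nth Nat.Prime n : ℝ) := by
      obtain ⟨i, hi⟩ := exists_lt_nthP y k; exact ⟨i + k, hi⟩
    classical
    set m := Nat.find hex with hm
    have hym : y < (Nat.nth Nat.Prime m : ℝ) := Nat.find_spec hex
    have hmin : ∀ n < m, (Nat.nth Nat.Prime n : ℝ) ≤ y := by
      intro n hn
      have := Nat.find_min hex hn
      linarith [not_lt.mp this]
    have hkm : k ≤ m := by
      by_contra h
      push_neg at h
      have h1 : m ≤ k - 1 := by omega
      have : (Nat.nth Nat.Prime m : ℝ) ≤ (Nat.nth Nat.Prime (k-1) : ℝ) := by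
        exact_mod_cast nthP_strictMono.monotone h1
      linarith
    set i := m - k with hi
    have him : i + k = m := by omega
    -- eta ≤ p_i / p_{i+k}
    have hηle : eta k x ≤ (Nat.nth Nat.Prime i : ℝ) / (Nat.nth Nat.Prime (i + k) : ℝ) := by
      apply csInf_le (etaSet_bddBelow k x)
      exact ⟨i, by rw [him]; linarith, rfl⟩
    have hηy : eta k x * y < (Nat.nth Nat.Prime i : ℝ) := by
      have h1 : eta k x * y ≤ (Nat.nth Nat.Prime i : ℝ) / (Nat.nth Nat.Prime (i + k) : ℝ) * y :=
        mul_le_mul_of_nonneg_right hηle hy0.le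
      have h2 : (Nat.nth Nat.Prime i : ℝ) / (Nat.nth Nat.Prime (i + k) : ℝ) * y
          < (Nat.nth Nat.Prime i : ℝ) := by
        rw [div_mul_eq_mul_div, div_lt_iff₀ (nthP_pos _)]
        have := nthP_pos i
        have hyk : y < (Nat.nth Nat.Prime (i + k) : ℝ) := by rw [him]; exact hym
        nlinarith
      linarith
    -- the k primes p_i, ..., p_{i+k-1}
    set T : Finset ℕ := (Finset.range k).image (fun t => Nat.nth Nat.Prime (i + t)) with hT
    have hTcard : T.card = k := by
      rw [hT, Finset.card_image_of_injective _
        (fun a b hab => by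
          have := nthP_strictMono.injective hab; omega),
        Finset.card_range]
    have hTsub : ↑T ⊆ {p : ℕ | p.Prime ∧ eta k x * y < (p : ℝ) ∧ (p : ℝ) ≤ y} := by
      intro p hp
      simp only [hT, Finset.coe_image, Finset.coe_range, Set.mem_image, Set.mem_Iio] at hp
      obtain ⟨t, ht, rfl⟩ := hp
      refine ⟨Nat.prime_nth_prime _, ?_, ?_⟩
      · have : (Nat.nth Nat.Prime i : ℝ) ≤ (Nat.nth Nat.Prime (i + t) : ℝ) := by
          exact_mod_cast nthP_strictMono.monotone (by omega)
        linarith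
      · exact hmin (i + t) (by omega)
    calc k = T.card := hTcard.symm
      _ = (↑T : Set ℕ).ncard := (Set.ncard_coe_finset T).symm
      _ ≤ primeCountIoc (eta k x * y) y :=
          Set.ncard_le_ncard hTsub (primeSet_finite _ _)
  · intro l hl
    apply le_csInf (etaSet_nonempty k x)
    rintro r ⟨i, hix, rfl⟩
    rcases le_or_gt l 0 with h0 | h0
    · exact le_trans h0 (by positivity)
    by_contra hcon
    push_neg at hcon
    have hpik := nthP_pos (i + k)
    have hpi := nthP_pos i
    have hlt : (Nat.nth Nat.Prime i : ℝ) < l * (Nat.nth Nat.Prime (i + k) : ℝ) := by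
      rw [div_lt_iff₀ hpik] at hcon; linarith
    set y := max x ((Nat.nth Nat.Prime i : ℝ) / l) with hy
    have hy1 : x ≤ y := le_max_left _ _
    have hy2 : y < (Nat.nth Nat.Prime (i + k) : ℝ) := by
      apply max_lt hix
      rw [div_lt_iff₀ h0]
      linarith
    have hly : (Nat.nth Nat.Prime i : ℝ) ≤ l * y := by
      have : (Nat.nth Nat.Prime i : ℝ) / l ≤ y := le_max_right _ _
      calc (Nat.nth Nat.Prime i : ℝ) = l * ((Nat.nth Nat.Prime i : ℝ) / l) := by
            field_simp
        _ ≤ l * y := mul_le_mul_of_nonneg_left this h0.le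
    -- the primes in (l*y, y] lie strictly between p_i and p_{i+k}
    classical
    set F : Finset ℕ := (Finset.Ioo i (i + k)).image (Nat.nth Nat.Prime) with hF
    have hsub : {p : ℕ | p.Prime ∧ l * y < (p : ℝ) ∧ (p : ℝ) ≤ y} ⊆ ↑F := by
      rintro p ⟨hp, hp1, hp2⟩
      have hpe : Nat.nth Nat.Prime (Nat.count Nat.Prime p) = p := Nat.nth_count hp
      have hgt : Nat.nth Nat.Prime i < p := by exact_mod_cast lt_of_le_of_lt hly hp1
      have hltk : p < Nat.nth Nat.Prime (i + k) := by exact_mod_cast lt_of_le_of_lt hp2 hy2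
      have hc1 : i < Nat.count Nat.Prime p := by
        have := nthP_strictMono.lt_iff_lt (a := i) (b := Nat.count Nat.Prime p)
        rw [← this]; rw [hpe]; exact hgt
      have hc2 : Nat.count Nat.Prime p < i + k := by
        have := nthP_strictMono.lt_iff_lt (a := Nat.count Nat.Prime p) (b := i + k)
        rw [← this]; rw [hpe]; exact hltk
      simp only [hF, Finset.coe_image, Set.mem_image, Finset.mem_coe, Finset.mem_Ioo]
      exact ⟨Nat.count Nat.Prime p, ⟨hc1, hc2⟩, hpe⟩
    have hcard : primeCountIoc (l * y) y ≤ k - 1 := by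
      calc primeCountIoc (l * y) y ≤ (↑F : Set ℕ).ncard :=
            Set.ncard_le_ncard hsub F.finite_toSet
        _ = F.card := Set.ncard_coe_finset F
        _ ≤ (Finset.Ioo i (i + k)).card := Finset.card_image_le
        _ = k - 1 := by rw [Nat.card_Ioo]; omega
    have := hl y hy1
    omega
end

section
/- Let i₀ ≥ 1 and k ≥ 1 be integers, and let f : [p_{i₀}, ∞) → ℝ be an increasing function such that p_{i+1} ≤ p_i + f(p_{i+1}) for all i ≥ i₀. Let x ≥ p_{i₀+k−1} and suppose the function t ↦ f(t)/t is decreasing for t ≥ x. Then η_k(x) ≥ 1 − k·f(x)/x. -/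
private lemma nth_prime_mono : Monotone (Nat.nth Nat.Prime) :=
  Nat.nth_monotone Nat.infinite_setOf_prime

/-- Telescoping estimate: p_{i+k} ≤ p_i + k·f(p_{i+k}). -/
private lemma telescope (i₀ : ℕ) (f : ℝ → ℝ)
    (hmono : MonotoneOn f (Set.Ici (Nat.nth Nat.Prime (i₀ - 1) : ℝ)))
    (hgap : ∀ i : ℕ, i₀ ≤ i →
      (Nat.nth Nat.Prime i : ℝ) ≤
        (Nat.nth Nat.Prime (i - 1) : ℝ) + f (Nat.nth Nat.Prime i))
    (i : ℕ) (hi : i₀ ≤ i + 1) : ∀ k : ℕ,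
    (Nat.nth Nat.Prime (i + k) : ℝ) ≤
      (Nat.nth Nat.Prime i : ℝ) + k * f (Nat.nth Nat.Prime (i + k)) := by
  intro k
  induction k with
  | zero => simp
  | succ k ih =>
    have hmem : ∀ m : ℕ, i₀ - 1 ≤ m →
        (Nat.nth Nat.Prime m : ℝ) ∈ Set.Ici (Nat.nth Nat.Prime (i₀ - 1) : ℝ) := by
      intro m hm
      exact_mod_cast Set.mem_Ici.2 (Nat.cast_le.2 (nth_prime_mono hm))
    have hg := hgap (i + (k + 1)) (by omega)
    have hidx : i + (k + 1) - 1 = i + k := by omega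
    rw [hidx] at hg
    have hfm : f (Nat.nth Nat.Prime (i + k)) ≤ f (Nat.nth Nat.Prime (i + (k + 1))) := by
      apply hmono (hmem _ (by omega)) (hmem _ (by omega))
      exact_mod_cast Nat.cast_le.2 (nth_prime_mono (by omega))
    have hkf : (k : ℝ) * f (Nat.nth Nat.Prime (i + k)) ≤
        (k : ℝ) * f (Nat.nth Nat.Prime (i + (k + 1))) :=
      mul_le_mul_of_nonneg_left hfm (Nat.cast_nonneg k)
    push_cast
    calc (Nat.nth Nat.Prime (i + (k + 1)) : ℝ)
        ≤ (Nat.nth Nat.Prime (i + k) : ℝ) + f (Nat.nth Nat.Prime (i + (k + 1))) := hg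
      _ ≤ ((Nat.nth Nat.Prime i : ℝ) + k * f (Nat.nth Nat.Prime (i + k)))
            + f (Nat.nth Nat.Prime (i + (k + 1))) := by linarith [ih]
      _ ≤ (Nat.nth Nat.Prime i : ℝ) + ((k : ℝ) + 1) * f (Nat.nth Nat.Prime (i + (k + 1))) := by
          rw [add_one_mul]; linarith [hkf]

/-- If f is increasing on [p_{i₀}, ∞), p_{i+1} ≤ p_i + f(p_{i+1}) for all i ≥ i₀,
x ≥ p_{i₀+k−1} and t ↦ f(t)/t is decreasing on [x, ∞), then η_k(x) ≥ 1 − k·f(x)/x. -/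
theorem stmt10 (i₀ k : ℕ) (hi₀ : 1 ≤ i₀) (hk : 1 ≤ k) (f : ℝ → ℝ)
    (hmono : MonotoneOn f (Set.Ici (Nat.nth Nat.Prime (i₀ - 1) : ℝ)))
    (hgap : ∀ i : ℕ, i₀ ≤ i →
      (Nat.nth Nat.Prime i : ℝ) ≤
        (Nat.nth Nat.Prime (i - 1) : ℝ) + f (Nat.nth Nat.Prime i))
    (x : ℝ) (hx : (Nat.nth Nat.Prime (i₀ + k - 2) : ℝ) ≤ x)
    (hdec : AntitoneOn (fun t => f t / t) (Set.Ici x)) :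
    1 - k * (f x / x) ≤ eta k x := by
  have hxpos : 0 < x := by
    have h2 : 2 ≤ Nat.nth Nat.Prime (i₀ + k - 2) := (Nat.prime_nth_prime _).two_le
    have : (2 : ℝ) ≤ (Nat.nth Nat.Prime (i₀ + k - 2) : ℝ) := by exact_mod_cast h2
    linarith
  unfold eta
  apply le_csInf
  · -- nonempty
    refine ⟨(Nat.nth Nat.Prime (⌊x⌋₊ + 1) : ℝ) / (Nat.nth Nat.Prime (⌊x⌋₊ + 1 + k) : ℝ),
      ⌊x⌋₊ + 1, ?_, rfl⟩
    have h1 : (⌊x⌋₊ + 1 + k : ℕ) ≤ Nat.nth Nat.Prime (⌊x⌋₊ + 1 + k) :=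
      (Nat.nth_strictMono Nat.infinite_setOf_prime).le_apply
    have h2 : x < ((⌊x⌋₊ + 1 : ℕ) : ℝ) := by push_cast; exact Nat.lt_floor_add_one x
    have : ((⌊x⌋₊ + 1 : ℕ) : ℝ) ≤ ((⌊x⌋₊ + 1 + k : ℕ) : ℝ) := by exact_mod_cast Nat.le_add_right _ _
    calc x < ((⌊x⌋₊ + 1 : ℕ) : ℝ) := h2
      _ ≤ ((⌊x⌋₊ + 1 + k : ℕ) : ℝ) := this
      _ ≤ (Nat.nth Nat.Prime (⌊x⌋₊ + 1 + k) : ℝ) := by exact_mod_cast h1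
  · rintro r ⟨i, hix, rfl⟩
    -- i + 1 ≥ i₀
    have hii : i₀ ≤ i + 1 := by
      by_contra h
      push_neg at h
      have : i + k ≤ i₀ + k - 2 := by omega
      have := nth_prime_mono this
      have : (Nat.nth Nat.Prime (i + k) : ℝ) ≤ (Nat.nth Nat.Prime (i₀ + k - 2) : ℝ) := by
        exact_mod_cast this
      linarith
    have htel := telescope i₀ f hmono hgap i hii k
    set p : ℝ := (Nat.nth Nat.Prime (i + k) : ℝ) with hp
    set q : ℝ := (Nat.nth Nat.Prime i : ℝ) with hq
    have hppos : 0 < p := by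
      have := (Nat.prime_nth_prime (i + k)).pos
      rw [hp]; exact_mod_cast this
    have hxp : x ≤ p := le_of_lt hix
    have hratio : f p / p ≤ f x / x :=
      hdec (Set.self_mem_Ici) (Set.mem_Ici.2 hxp) hxp
    -- from htel : p ≤ q + k * f p
    have key : 1 - (k : ℝ) * (f p / p) ≤ q / p := by
      rw [le_div_iff₀ hppos]
      have hA : (k : ℝ) * (f p / p) * p = (k : ℝ) * f p := by
        field_simp
      nlinarith [htel, hA]
    have hkf : (k : ℝ) * (f p / p) ≤ (k : ℝ) * (f x / x) :=
      mul_le_mul_of_nonneg_left hratio (Nat.cast_nonneg k)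
    linarith
end

section
/- Let 0 < η < 1 and define the sequence (γ_j) by γ_0 = 0 and γ_j = (1 + η·γ_{j−1}²)/2 for j ≥ 1. Set ε = 1 − η and L_ε = 1/(1+√ε). Then (γ_j) is strictly increasing with γ_1 = 1/2 and γ_{j+1} < (1+γ_j²)/2 for all j ≥ 1; its limit as j → ∞ is L_ε; and for every j ≥ 0, L_ε − γ_j ≤ L_ε·(1−√ε)^j. -/
/-- The uniform g-sequence γ_0 = 0, γ_j = (1 + η γ_{j−1}²)/2 is strictly increasing,
has γ_1 = 1/2, satisfies γ_{j+1} < (1+γ_j²)/2, tends to L_ε = 1/(1+√ε) with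
ε = 1 − η, and L_ε − γ_j ≤ L_ε (1−√ε)^j for all j ≥ 0. -/
theorem stmt13 (η : ℝ) (hη : 0 < η) (hη1 : η < 1) (γ : ℕ → ℝ)
    (hγ0 : γ 0 = 0) (hγ : ∀ j : ℕ, 1 ≤ j → γ j = (1 + η * γ (j - 1) ^ 2) / 2) :
    StrictMono γ ∧ γ 1 = 1 / 2 ∧
    (∀ j : ℕ, 1 ≤ j → γ (j + 1) < (1 + γ j ^ 2) / 2) ∧
    Filter.Tendsto γ Filter.atTop (nhds (1 / (1 + Real.sqrt (1 - η)))) ∧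
    ∀ j : ℕ, 1 / (1 + Real.sqrt (1 - η)) - γ j ≤
      1 / (1 + Real.sqrt (1 - η)) * (1 - Real.sqrt (1 - η)) ^ j := by
  have hε : 0 < 1 - η := by linarith
  set s := Real.sqrt (1 - η) with hsdef
  have hs0 : 0 < s := Real.sqrt_pos.mpr hε
  have hs2 : s ^ 2 = 1 - η := Real.sq_sqrt hε.le
  have hs1 : s < 1 := by nlinarith
  have h1s : (0:ℝ) < 1 + s := by linarith
  set L := 1 / (1 + s) with hLdef
  have hL0 : 0 < L := by positivity
  have hη' : η = 1 - s ^ 2 := by linarith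
  have hfix : (1 + η * L ^ 2) / 2 = L := by
    rw [hLdef, hη']; field_simp; ring
  have hηL : η * L = 1 - s := by
    rw [hLdef, hη']; field_simp; ring
  have hγ1 : γ 1 = 1 / 2 := by
    have := hγ 1 le_rfl; simpa [hγ0] using this
  have key : ∀ j : ℕ, 0 ≤ γ j ∧ γ j ≤ L ∧ L - γ j ≤ L * (1 - s) ^ j := by
    intro j
    induction j with
    | zero =>
      refine ⟨by rw [hγ0], by rw [hγ0]; linarith, ?_⟩
      simp [hγ0]
    | succ n ih =>
      obtain ⟨hnn, hle, he⟩ := ih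
      have hrec : γ (n + 1) = (1 + η * γ n ^ 2) / 2 := by
        have := hγ (n + 1) (by omega); simpa using this
      refine ⟨by rw [hrec]; positivity, ?_, ?_⟩
      · rw [hrec]
        nlinarith [mul_nonneg hη.le (mul_nonneg (sub_nonneg.mpr hle) (by linarith : 0 ≤ L + γ n))]
      · have hp : L * (1 - s) ^ (n + 1) = η * L * (L * (1 - s) ^ n) := by
          rw [pow_succ, hηL]; ring
        rw [hrec, hp]
        have hmul : η * L * (L - γ n) ≤ η * L * (L * (1 - s) ^ n) :=
          mul_le_mul_of_nonneg_left he (by positivity)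
        nlinarith [mul_nonneg (mul_nonneg hη.le (sub_nonneg.mpr hle)) (sub_nonneg.mpr hle)]
  have hmono : ∀ n : ℕ, γ n < γ (n + 1) := by
    intro n
    induction n with
    | zero => rw [hγ0, hγ1]; norm_num
    | succ m ih =>
      have h1 : γ (m + 1) = (1 + η * γ m ^ 2) / 2 := by
        have := hγ (m + 1) (by omega); simpa using this
      have h2 : γ (m + 2) = (1 + η * γ (m + 1) ^ 2) / 2 := by
        have := hγ (m + 2) (by omega); simpa using this
      have hnn := (key m).1
      rw [h1, h2]
      nlinarith [mul_pos hη (mul_pos (sub_pos.mpr ih) (show 0 < γ (m + 1) + γ m by linarith))]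
  have hsm : StrictMono γ := strictMono_nat_of_lt_succ hmono
  refine ⟨hsm, hγ1, ?_, ?_, fun j => (key j).2.2⟩
  · intro j hj
    have h1 : γ (j + 1) = (1 + η * γ j ^ 2) / 2 := by
      have := hγ (j + 1) (by omega); simpa using this
    have hjpos : (0:ℝ) < γ j := by
      have := hsm.le_iff_le.mpr hj
      have h2 := hγ1
      nlinarith [hsm.monotone hj]
    rw [h1]
    nlinarith [mul_pos hjpos hjpos]
  · have h0 : Filter.Tendsto (fun j : ℕ => L * (1 - s) ^ j) Filter.atTop (nhds 0) := by
      have := tendsto_pow_atTop_nhds_zero_of_lt_one (by linarith : (0:ℝ) ≤ 1 - s)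
        (by linarith : 1 - s < 1)
      simpa using this.const_mul L
    have hsq : Filter.Tendsto (fun j : ℕ => L - γ j) Filter.atTop (nhds 0) :=
      squeeze_zero (fun j => by linarith [(key j).2.1]) (fun j => (key j).2.2) h0
    have := hsq.const_sub L
    simpa using this
end

section
/- Let 0 < η < 1, set ε = 1 − η, and define the sequence (γ_j) by γ_0 = 0 and γ_j = (1 + η·γ_{j−1}²)/2 for j ≥ 1. For k ≥ 1 set α_k = 2γ_{k+1} − 1 and β_k = γ_k². Then there is no pair of integers (k, j) with k ≥ 1 and j ≥ 0 such that α_k ≤ γ_j and γ_{j+1} ≤ β_k (i.e. no interval (γ_j, γ_{j+1}] is contained in an interval (α_k, β_k]); consequently each interval (α_k, β_k] meets at most two of the intervals (γ_j, γ_{j+1}]. -/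
/-- Key algebraic contradiction: if `t ≤ L² = 1/(1+s)²` (with `s = √(1-η)`) then
`η³t² - 2t + 1 > 0`, contradicting `η³t² + 1 ≤ 2t`. -/
lemma stmt14_aux (η s t : ℝ) (hη : 0 < η) (hs0 : 0 < s) (hs1 : s < 1)
    (hs2 : s^2 = 1 - η) (ht0 : 0 ≤ t) (htL : t * (1+s)^2 ≤ 1)
    (hf : η^3 * t^2 + 1 ≤ 2*t) : False := by
  have hη' : η = 1 - s^2 := by linarith
  rw [hη'] at hf
  set u : ℝ := t * (1+s)^2 with hu
  have hu0 : 0 ≤ u := by positivity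
  have h1 : (1-s)^3*(1+s) ≤ 1 := by nlinarith [sq_nonneg s, sq_nonneg (1-s), mul_pos hs0 hs0]
  have h2 : 0 < s^2 + 2*s^3 - s^4 := by nlinarith [sq_nonneg s, mul_pos hs0 hs0]
  have key : 0 < (1-s)^3*(1+s)*u^2 - 2*u + (1+s)^2 := by
    nlinarith [mul_nonneg (sub_nonneg.2 htL) (sub_nonneg.2 (show (1-s)^3*(1+s)*(1+u) ≤ 2 by nlinarith)), h2]
  have hmul : ((1-s^2)^3 * t^2 + 1) * (1+s)^2 ≤ (2*t) * (1+s)^2 :=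
    mul_le_mul_of_nonneg_right hf (by positivity)
  rw [hu] at key
  nlinarith [key, hmul]

/-- For the uniform g-sequence of parameter η, with α_k = 2γ_{k+1} − 1 and β_k = γ_k²,
no interval (γ_j, γ_{j+1}] is contained in an interval (α_k, β_k]; consequently each
interval (α_k, β_k] meets at most two of the intervals (γ_j, γ_{j+1}]. -/
theorem stmt14 (η : ℝ) (hη : 0 < η) (hη1 : η < 1) (γ : ℕ → ℝ)
    (hγ0 : γ 0 = 0) (hγ : ∀ j : ℕ, 1 ≤ j → γ j = (1 + η * γ (j - 1) ^ 2) / 2) :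
    (¬ ∃ k j : ℕ, 1 ≤ k ∧ 2 * γ (k + 1) - 1 ≤ γ j ∧ γ (j + 1) ≤ γ k ^ 2) ∧
    ∀ k : ℕ, 1 ≤ k → ∀ j₁ j₂ j₃ : ℕ,
      (Set.Ioc (2 * γ (k + 1) - 1) (γ k ^ 2) ∩ Set.Ioc (γ j₁) (γ (j₁ + 1))).Nonempty →
      (Set.Ioc (2 * γ (k + 1) - 1) (γ k ^ 2) ∩ Set.Ioc (γ j₂) (γ (j₂ + 1))).Nonempty →
      (Set.Ioc (2 * γ (k + 1) - 1) (γ k ^ 2) ∩ Set.Ioc (γ j₃) (γ (j₃ + 1))).Nonempty →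
      j₁ = j₂ ∨ j₁ = j₃ ∨ j₂ = j₃ := by
  have hrec : ∀ n : ℕ, γ (n+1) = (1 + η * γ n ^ 2) / 2 := by
    intro n
    have := hγ (n+1) (by omega)
    simpa using this
  have hnonneg : ∀ j, 0 ≤ γ j := by
    intro j
    cases j with
    | zero => simp [hγ0]
    | succ n =>
      rw [hrec n]
      have : 0 ≤ η * γ n ^ 2 := by positivity
      linarith
  set s : ℝ := Real.sqrt (1 - η) with hs
  have hs2 : s^2 = 1 - η := Real.sq_sqrt (by linarith)
  have hs0 : 0 < s := Real.sqrt_pos.mpr (by linarith)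
  have hs1 : s < 1 := by nlinarith [hs2, hs0]
  -- upper bound γ j ≤ L = 1/(1+s)
  have hub : ∀ j, γ j * (1 + s) ≤ 1 := by
    intro j
    induction j with
    | zero => rw [hγ0]; nlinarith
    | succ n ih =>
      rw [hrec n]
      have hb0 : 0 ≤ γ n * (1+s) := mul_nonneg (hnonneg n) (by linarith)
      have hb2 : (γ n * (1+s))^2 ≤ 1 := by nlinarith
      have hη' : η = 1 - s^2 := by linarith
      rw [hη']
      nlinarith [mul_nonneg (by linarith : (0:ℝ) ≤ 1 - s)
        (by linarith : (0:ℝ) ≤ 1 - (γ n * (1+s))^2)]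
  -- monotonicity
  have hmono : ∀ j, γ j ≤ γ (j+1) := by
    intro j
    induction j with
    | zero => rw [hγ0, hrec 0]; nlinarith [hnonneg 0, sq_nonneg (γ 0)]
    | succ n ih =>
      rw [hrec n, hrec (n+1)]
      have h1 : γ n ^ 2 ≤ γ (n+1) ^ 2 := by
        have := hnonneg n
        nlinarith
      have : η * γ n ^ 2 ≤ η * γ (n+1) ^ 2 := mul_le_mul_of_nonneg_left h1 hη.le
      linarith
  have hmono' : Monotone γ := monotone_nat_of_le_succ hmono
  -- γ k ≥ 1/2 for k ≥ 1
  have hhalf : ∀ k : ℕ, 1 ≤ k → 1/2 ≤ γ k := by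
    intro k hk
    obtain ⟨n, rfl⟩ : ∃ n, k = n + 1 := ⟨k - 1, by omega⟩
    rw [hrec n]
    have : 0 ≤ η * γ n ^ 2 := by positivity
    linarith
  -- Part 1: no containment
  have part1 : ¬ ∃ k j : ℕ, 1 ≤ k ∧ 2 * γ (k + 1) - 1 ≤ γ j ∧ γ (j + 1) ≤ γ k ^ 2 := by
    rintro ⟨k, j, hk, h1, h2⟩
    have hα : 2 * γ (k+1) - 1 = η * γ k ^ 2 := by rw [hrec k]; ring
    rw [hα] at h1
    have hγk : 1/2 ≤ γ k := hhalf k hk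
    cases j with
    | zero =>
      rw [hγ0] at h1
      nlinarith [mul_pos hη (show (0:ℝ) < γ k ^ 2 by nlinarith)]
    | succ n =>
      -- h1 : η * γ k ^ 2 ≤ γ (n+1), h2 : γ (n+2) ≤ γ k ^ 2
      rw [hrec (n+1)] at h2
      have hb0 : 0 ≤ γ k * (1+s) := mul_nonneg (hnonneg k) (by linarith)
      have htL : γ k ^ 2 * (1+s)^2 ≤ 1 := by
        nlinarith [hub k, mul_nonneg (sub_nonneg.2 (hub k)) hb0]
      have hf : η^3 * (γ k ^ 2)^2 + 1 ≤ 2 * (γ k ^ 2) := by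
        have ha0 : 0 ≤ γ (n+1) := hnonneg (n+1)
        have hηt : 0 ≤ η * γ k ^ 2 := by positivity
        have hsq : (η * γ k ^ 2)^2 ≤ γ (n+1)^2 := by nlinarith
        have := mul_le_mul_of_nonneg_left hsq hη.le
        nlinarith
      exact stmt14_aux η s (γ k ^ 2) hη hs0 hs1 hs2 (sq_nonneg _) htL hf
  -- Part 2
  refine ⟨part1, ?_⟩
  intro k hk j₁ j₂ j₃ h1 h2 h3
  -- key helper: no two intersections indices a < c with a + 2 ≤ c
  have hkey : ∀ a c : ℕ, a + 2 ≤ c →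
      (Set.Ioc (2 * γ (k + 1) - 1) (γ k ^ 2) ∩ Set.Ioc (γ a) (γ (a + 1))).Nonempty →
      (Set.Ioc (2 * γ (k + 1) - 1) (γ k ^ 2) ∩ Set.Ioc (γ c) (γ (c + 1))).Nonempty →
      False := by
    intro a c hac ⟨x, hx1, hx2⟩ ⟨z, hz1, hz2⟩
    obtain ⟨hx1a, hx1b⟩ := hx1
    obtain ⟨hx2a, hx2b⟩ := hx2
    obtain ⟨hz1a, hz1b⟩ := hz1
    obtain ⟨hz2a, hz2b⟩ := hz2
    apply part1
    refine ⟨k, a + 1, hk, ?_, ?_⟩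
    · -- 2γ(k+1)-1 < x ≤ γ(a+1)
      linarith
    · -- γ(a+2) ≤ γ c < z ≤ γ k ^ 2
      have : γ (a + 1 + 1) ≤ γ c := hmono' (by omega)
      linarith
  rcases Nat.lt_trichotomy j₁ j₂ with h12 | h12 | h12
  · rcases Nat.lt_trichotomy j₂ j₃ with h23 | h23 | h23
    · exact absurd (hkey j₁ j₃ (by omega) h1 h3) id
    · right; right; exact h23
    · rcases Nat.lt_trichotomy j₁ j₃ with h13 | h13 | h13
      · exact absurd (hkey j₁ j₂ (by omega) h1 h2) id
      · right; left; exact h13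
      · exact absurd (hkey j₃ j₂ (by omega) h3 h2) id
  · left; exact h12
  · rcases Nat.lt_trichotomy j₂ j₃ with h23 | h23 | h23
    · rcases Nat.lt_trichotomy j₁ j₃ with h13 | h13 | h13
      · exact absurd (hkey j₂ j₃ (by omega) h2 h3) id
      · right; left; exact h13
      · exact absurd (hkey j₂ j₁ (by omega) h2 h1) id
    · right; right; exact h23
    · exact absurd (hkey j₃ j₁ (by omega) h3 h1) id
end

section
/- Let n ≥ 2, let α ≥ 2 be an integer and let λ be a prime such that λ^α divides g(n). Let q be the smallest prime strictly greater than P⁺(g(n)). Then: (i) λ^α − λ^{α−1} < q; (ii) λ < q^{1/α} + 1; (iii) α < log(2q)/log 2. -/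
lemma multiset_lcm_ne_zero (s : Multiset ℕ) (h0 : ∀ m ∈ s, m ≠ 0) : s.lcm ≠ 0 := by
  induction s using Multiset.induction with
  | empty => simp
  | cons x t ih =>
    rw [Multiset.lcm_cons]
    exact Nat.lcm_ne_zero (h0 x (Multiset.mem_cons_self x t))
      (ih fun m hm => h0 m (Multiset.mem_cons_of_mem hm))

lemma pow_dvd_mem_of_dvd_lcm {p a : ℕ} (hp : p.Prime) (ha : a ≠ 0) (s : Multiset ℕ)
    (h0 : ∀ m ∈ s, m ≠ 0) (h : p ^ a ∣ s.lcm) : ∃ m ∈ s, p ^ a ∣ m := by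
  induction s using Multiset.induction with
  | empty =>
    exfalso
    simp only [Multiset.lcm_zero] at h
    have : p ∣ 1 := (dvd_pow_self p ha).trans h
    exact hp.one_lt.ne' (Nat.eq_one_of_dvd_one this)
  | cons x t ih =>
    have hx : x ≠ 0 := h0 x (Multiset.mem_cons_self x t)
    have ht : ∀ m ∈ t, m ≠ 0 := fun m hm => h0 m (Multiset.mem_cons_of_mem hm)
    have htl : t.lcm ≠ 0 := multiset_lcm_ne_zero t ht
    rw [Multiset.lcm_cons] at h
    have hle : a ≤ (Nat.lcm x t.lcm).factorization p :=
      (hp.pow_dvd_iff_le_factorization (Nat.lcm_ne_zero hx htl)).1 h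
    rw [Nat.factorization_lcm hx htl] at hle
    rcases le_max_iff.1 (by simpa using hle) with hc | hc
    · exact ⟨x, Multiset.mem_cons_self x t,
        (hp.pow_dvd_iff_le_factorization hx).2 hc⟩
    · obtain ⟨m, hm, hd⟩ := ih ht ((hp.pow_dvd_iff_le_factorization htl).2 hc)
      exact ⟨m, Multiset.mem_cons_of_mem hm, hd⟩

/-- Chebyshev's function θ(x) = Σ_{p ≤ x, p prime} log p. -/
noncomputable def chebTheta (x : ℝ) : ℝ :=
  ∑ p ∈ Finset.filter Nat.Prime (Finset.range (⌊x⌋₊ + 1)), Real.log p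

/-- Part (i): if `lam ^ α ∣ landau n` with `α ≥ 2` and `q` is a prime exceeding
`maxPrimeFac (landau n)`, then `lam ^ α - lam ^ (α - 1) < q`. -/
lemma landau_part_i (n : ℕ) (α : ℕ) (hα : 2 ≤ α) (lam : ℕ) (hlam : lam.Prime)
    (hdvd : lam ^ α ∣ landau n) (q : ℕ) (hq : q.Prime)
    (hq1 : maxPrimeFac (landau n) < q) :
    lam ^ α - lam ^ (α - 1) < q := by
  set g := landau n with hgdef
  have hg1 : 1 ≤ g :=
    calc 1 = orderOf (1 : Equiv.Perm (Fin n)) := orderOf_one.symm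
    _ ≤ g := Finset.le_sup (f := fun σ : Equiv.Perm (Fin n) => orderOf σ)
      (Finset.mem_univ (1 : Equiv.Perm (Fin n)))
  have hgne : g ≠ 0 := by omega
  have hlamdvd : lam ∣ g := (dvd_pow_self lam (by omega : α ≠ 0)).trans hdvd
  have hlamle : lam ≤ maxPrimeFac g :=
    Finset.le_sup (f := id) (Nat.mem_primeFactors.2 ⟨hlam, hlamdvd, hgne⟩)
  have hlamq : lam < q := lt_of_le_of_lt hlamle hq1
  have hqndvd : ¬ q ∣ g := by
    intro hd
    have h1 : q ≤ maxPrimeFac g :=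
      Finset.le_sup (f := id) (Nat.mem_primeFactors.2 ⟨hq, hd, hgne⟩)
    omega
  by_contra hcon
  push_neg at hcon
  obtain ⟨σ, -, hσ⟩ := Finset.exists_mem_eq_sup (Finset.univ : Finset (Equiv.Perm (Fin n)))
    Finset.univ_nonempty (fun σ : Equiv.Perm (Fin n) => orderOf σ)
  have hσg : orderOf σ = g := hσ.symm
  have hlcm : σ.cycleType.lcm = g := by rw [Equiv.Perm.lcm_cycleType, hσg]
  have h0 : ∀ m ∈ σ.cycleType, m ≠ 0 := fun m hm => by
    have := Equiv.Perm.two_le_of_mem_cycleType hm; omega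
  obtain ⟨m, hm, hmd⟩ := pow_dvd_mem_of_dvd_lcm hlam (by omega) σ.cycleType h0
    (hlcm ▸ hdvd)
  have hlam1 : 2 ≤ lam := hlam.two_le
  obtain ⟨k, hmk⟩ : lam ∣ m := (dvd_pow_self lam (by omega : α ≠ 0)).trans hmd
  have hmne : m ≠ 0 := h0 m hm
  have hkne : k ≠ 0 := by rintro rfl; simp [hmk] at hmne
  have hPk : lam ^ (α - 1) ∣ k := by
    have h1 : lam * lam ^ (α - 1) ∣ lam * k := by
      rw [← hmk, ← pow_succ']
      have : α - 1 + 1 = α := by omega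
      rw [this]
      exact hmd
    exact (mul_dvd_mul_iff_left (by omega : lam ≠ 0)).1 h1
  have hPle : lam ^ (α - 1) ≤ k := Nat.le_of_dvd (Nat.pos_of_ne_zero hkne) hPk
  have hqk : q + k ≤ m := by
    have e1 : lam ^ α = lam ^ (α - 1) * lam := by
      rw [← pow_succ]; congr 1; omega
    have e4 : lam ^ (α - 1) * (lam - 1) = lam ^ (α - 1) * lam - lam ^ (α - 1) := by
      rw [Nat.mul_sub, mul_one]
    have e3 : lam ^ (α - 1) * (lam - 1) ≤ k * (lam - 1) :=
      Nat.mul_le_mul_right _ hPle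
    have e5 : k * (lam - 1) = k * lam - k := by rw [Nat.mul_sub, mul_one]
    have e6 : k ≤ k * lam := Nat.le_mul_of_pos_right k (by omega)
    have e7 : m = k * lam := by rw [hmk, mul_comm]
    omega
  -- the modified cycle type
  set c' : Multiset ℕ := q ::ₘ k ::ₘ (σ.cycleType.erase m) with hc'
  have herase : σ.cycleType = m ::ₘ σ.cycleType.erase m := (Multiset.cons_erase hm).symm
  have hsum : σ.cycleType.sum ≤ n := by
    rw [Equiv.Perm.sum_cycleType]
    simpa using (σ.support.card_le_univ)
  have hk2 : 2 ≤ k :=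
    le_trans (le_trans hlam1 (Nat.le_self_pow (by omega) lam)) hPle
  have hsum' : c'.sum ≤ n := by
    have hs : σ.cycleType.sum = m + (σ.cycleType.erase m).sum := by
      conv_lhs => rw [herase]
      rw [Multiset.sum_cons]
    rw [hc', Multiset.sum_cons, Multiset.sum_cons]
    omega
  have h2c : ∀ a ∈ c', 2 ≤ a := by
    intro a haa
    rw [hc', Multiset.mem_cons, Multiset.mem_cons] at haa
    rcases haa with rfl | rfl | haa
    · exact hq.two_le
    · exact hk2
    · exact Equiv.Perm.two_le_of_mem_cycleType (Multiset.mem_of_mem_erase haa)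
  obtain ⟨τ, hτ⟩ := (Equiv.Perm.exists_with_cycleType_iff (Fin n)).2
    ⟨by simpa using hsum', h2c⟩
  set L : ℕ := (k ::ₘ σ.cycleType.erase m).lcm with hL
  have hLdvd : L ∣ g := by
    apply Multiset.lcm_dvd.2
    intro b hb
    rw [Multiset.mem_cons] at hb
    rcases hb with rfl | hb
    · exact dvd_trans ⟨lam, by rw [hmk, mul_comm]⟩ (hlcm ▸ Multiset.dvd_lcm hm)
    · exact hlcm ▸ Multiset.dvd_lcm (Multiset.mem_of_mem_erase hb)
  have hgL : g ∣ lam * L := by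
    rw [← hlcm]
    conv_lhs => rw [herase]
    rw [Multiset.lcm_cons]
    apply Nat.lcm_dvd
    · rw [hmk]
      exact mul_dvd_mul_left lam (Multiset.dvd_lcm (Multiset.mem_cons_self _ _))
    · exact Dvd.dvd.mul_left (Multiset.lcm_dvd.2 fun b hb =>
        Multiset.dvd_lcm (Multiset.mem_cons_of_mem hb)) lam
  have hLne : L ≠ 0 := multiset_lcm_ne_zero _ (by
    intro b hb
    rw [Multiset.mem_cons] at hb
    rcases hb with rfl | hb
    · exact hkne
    · exact h0 b (Multiset.mem_of_mem_erase hb))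
  have hqL : Nat.Coprime q L :=
    (hq.coprime_iff_not_dvd).2 fun hd => hqndvd (hd.trans hLdvd)
  have horder : orderOf τ = q * L := by
    rw [← Equiv.Perm.lcm_cycleType, hτ, hc', Multiset.lcm_cons (a := q), ← hL]
    exact Nat.Coprime.lcm_eq_mul hqL
  have hgle : g < q * L := by
    have h1 : g ≤ lam * L := Nat.le_of_dvd
      (Nat.mul_pos (by omega) (Nat.pos_of_ne_zero hLne)) hgL
    have h2 : lam * L < q * L :=
      mul_lt_mul_of_pos_right hlamq (Nat.pos_of_ne_zero hLne)
    omega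
  have hle : orderOf τ ≤ g := Finset.le_sup (Finset.mem_univ τ)
  omega

/-- If λ^α divides g(n) with α ≥ 2 and q is the prime following P⁺(g(n)), then
λ^α − λ^{α−1} < q, λ < q^{1/α} + 1 and α < log(2q)/log 2. -/
theorem stmt16 (n : ℕ) (hn : 2 ≤ n) (α : ℕ) (hα : 2 ≤ α) (lam : ℕ) (hlam : lam.Prime)
    (hdvd : lam ^ α ∣ landau n) (q : ℕ) (hq : q.Prime)
    (hq1 : maxPrimeFac (landau n) < q)
    (hq2 : ∀ r : ℕ, r.Prime → maxPrimeFac (landau n) < r → q ≤ r) :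
    lam ^ α - lam ^ (α - 1) < q ∧
    (lam : ℝ) < (q : ℝ) ^ ((1 : ℝ) / α) + 1 ∧
    (α : ℝ) < Real.log (2 * q) / Real.log 2 := by
  have hi : lam ^ α - lam ^ (α - 1) < q := landau_part_i n α hα lam hlam hdvd q hq hq1
  refine ⟨hi, ?_, ?_⟩
  · -- part ii
    have hlam2 : 2 ≤ lam := hlam.two_le
    have e1 : lam ^ α = lam ^ (α - 1) * lam := by rw [← pow_succ]; congr 1; omega
    have e4 : lam ^ (α - 1) * (lam - 1) = lam ^ (α - 1) * lam - lam ^ (α - 1) := by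
      rw [Nat.mul_sub, mul_one]
    have hnat : (lam - 1) ^ α < q := by
      have h1 : (lam - 1) ^ α = (lam - 1) ^ (α - 1) * (lam - 1) := by
        rw [← pow_succ]; congr 1; omega
      have h2 : (lam - 1) ^ (α - 1) ≤ lam ^ (α - 1) :=
        Nat.pow_le_pow_left (Nat.sub_le lam 1) _
      have h3 : (lam - 1) ^ (α - 1) * (lam - 1) ≤ lam ^ (α - 1) * (lam - 1) :=
        Nat.mul_le_mul_right _ h2
      omega
    have hx : (0:ℝ) ≤ ((lam : ℝ) - 1) := by
      have : (2:ℝ) ≤ lam := by exact_mod_cast hlam2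
      linarith
    have hcast : ((lam : ℝ) - 1) ^ α < (q : ℝ) := by
      have hc : (((lam - 1 : ℕ) : ℝ)) ^ α < ((q : ℕ) : ℝ) := by exact_mod_cast hnat
      rwa [Nat.cast_sub (by omega), Nat.cast_one] at hc
    have hlt : (((lam : ℝ) - 1) ^ α) ^ ((1:ℝ)/α) < (q : ℝ) ^ ((1:ℝ)/α) :=
      Real.rpow_lt_rpow (by positivity) hcast (by positivity)
    have heq : (((lam : ℝ) - 1) ^ α) ^ ((1:ℝ)/α) = (lam : ℝ) - 1 := by
      rw [← Real.rpow_natCast ((lam:ℝ) - 1) α, ← Real.rpow_mul hx,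
        mul_one_div_cancel (by positivity : (α:ℝ) ≠ 0), Real.rpow_one]
    rw [heq] at hlt
    linarith
  · -- part iii
    have hlam2 : 2 ≤ lam := hlam.two_le
    have e1 : lam ^ α = lam ^ (α - 1) * lam := by rw [← pow_succ]; congr 1; omega
    have e4 : lam ^ (α - 1) * (lam - 1) = lam ^ (α - 1) * lam - lam ^ (α - 1) := by
      rw [Nat.mul_sub, mul_one]
    have h2a : 2 ^ (α - 1) < q := by
      have h2 : (2:ℕ) ^ (α - 1) ≤ lam ^ (α - 1) := Nat.pow_le_pow_left hlam2 _
      have h3 : lam ^ (α - 1) * 1 ≤ lam ^ (α - 1) * (lam - 1) :=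
        Nat.mul_le_mul_left _ (by omega)
      omega
    have h2b : 2 ^ α < 2 * q := by
      have : (2:ℕ) ^ α = 2 * 2 ^ (α - 1) := by
        rw [← pow_succ']; congr 1; omega
      omega
    have hcast : (2:ℝ) ^ α < 2 * (q : ℝ) := by exact_mod_cast h2b
    have hlog : Real.log ((2:ℝ) ^ α) < Real.log (2 * q) :=
      Real.log_lt_log (by positivity) hcast
    rw [Real.log_pow] at hlog
    have h2pos : (0:ℝ) < Real.log 2 := Real.log_pos one_lt_two
    rw [lt_div_iff₀ h2pos]
    exact_mod_cast hlog
end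

section
/- Let P ≥ 5 be a prime, set ρ = P/log P, and for each prime p define the exponent α_p by: α_p = 0 if p > P; α_p = 1 if p ≤ P and ρ < (p² − p)/log p; and α_p = i for the integer i ≥ 2 such that (p^i − p^{i−1})/log p ≤ ρ < (p^{i+1} − p^i)/log p, otherwise. Let N_P = ∏_{p ≤ P} p^{α_p} and n_P = Σ_{p ≤ P} p^{α_p}. Then g(n_P) = N_P, and θ(P) ≤ log N_P ≤ ψ(P). -/
/-- Chebyshev's function ψ(x) = Σ_{n ≤ x} Λ(n). -/
noncomputable def chebPsi (x : ℝ) : ℝ :=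
  ∑ n ∈ Finset.range (⌊x⌋₊ + 1), ArithmeticFunction.vonMangoldt n

open Finset

theorem Finset.sum_le_prod_of_two_le {ι : Type*} {s : Finset ι} {f : ι → ℕ}
    (h : ∀ i ∈ s, 2 ≤ f i) : ∑ i ∈ s, f i ≤ ∏ i ∈ s, f i := by
  classical
  induction s using Finset.induction_on with
  | empty => simp
  | insert a s ha ih =>
    rw [sum_insert ha, prod_insert ha]
    have hfa := h a (mem_insert_self a s)
    have hs := ih fun i hi => h i (mem_insert_of_mem hi)
    rcases s.eq_empty_or_nonempty with rfl | ⟨i, hi⟩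
    · simp
    · have hprod : 2 ≤ ∏ i ∈ s, f i := (h i (mem_insert_of_mem hi)).trans <|
        single_le_prod' (fun j hj => (h j (mem_insert_of_mem hj)).trans' one_le_two) hi
      nlinarith

theorem mul_sub_le_of_bracket {c : ℕ → ℝ} (hc : Monotone fun j => c (j + 1) - c j) {t : ℝ}
    {α : ℕ} (hlo : ∀ j < α, c (j + 1) - c j ≤ t) (hhi : t ≤ c (α + 1) - c α) (k : ℕ) :
    t * k - c k ≤ t * α - c α := by
  rcases le_total k α with hk | hk
  · refine monotoneOn_of_le_succ (f := fun k : ℕ => t * k - c k) Set.ordConnected_Iic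
      (fun j _ _ hj => ?_) (Set.mem_Iic.mpr hk) (Set.mem_Iic.mpr le_rfl) hk
    rw [Set.mem_Iic, Order.succ_eq_add_one] at hj
    rw [Order.succ_eq_add_one]
    push_cast
    linarith [hlo j hj]
  · refine antitoneOn_of_succ_le (f := fun k : ℕ => t * k - c k) Set.ordConnected_Ici
      (fun j _ hj _ => ?_) (Set.mem_Ici.mpr le_rfl) (Set.mem_Ici.mpr hk) hk
    rw [Order.succ_eq_add_one]
    push_cast
    linarith [hhi.trans (hc (Set.mem_Ici.mp hj))]

theorem strictAntiOn_log_div_self :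
    StrictAntiOn (fun x : ℝ => Real.log x / x) (Set.Ici (Real.exp 1)) := by
  intro x hex y _ hxy
  have x_pos : 0 < x := (Real.exp_pos 1).trans_le hex
  have y_pos : 0 < y := x_pos.trans hxy
  have hlogx : 1 ≤ Real.log x := by rwa [Real.le_log_iff_exp_le x_pos]
  have hyx : 1 < y / x := (one_lt_div x_pos).mpr hxy
  have hlog_div : Real.log y - Real.log x < y / x - 1 := by
    rw [← Real.log_div y_pos.ne' x_pos.ne']
    exact Real.log_lt_sub_one_of_pos (div_pos y_pos x_pos) hyx.ne'
  have hlogy : Real.log y < Real.log x * (y / x) := by nlinarith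
  calc Real.log y / y < Real.log x * (y / x) / y := div_lt_div_of_pos_right hlogy y_pos
    _ = Real.log x / x := by field_simp

theorem div_log_mul_log_le {x y : ℝ} (hx : Real.exp 1 ≤ x) (hxy : x ≤ y) :
    x / Real.log x * Real.log y ≤ y := by
  have x_pos : 0 < x := (Real.exp_pos 1).trans_le hx
  have hlogx : 0 < Real.log x := by linarith [(Real.le_log_iff_exp_le x_pos).mpr hx]
  have hanti := Real.log_div_self_antitoneOn hx (hx.trans hxy) hxy
  rw [div_le_div_iff₀ (by linarith) x_pos] at hanti
  rw [div_mul_eq_mul_div, div_le_iff₀ hlogx]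
  linarith

/-- `log x / x` decreases on `[e, ∞)`; the prime `2 < e` is handled through
`log 2 / 2 = log 4 / 4`. -/
theorem natCast_le_div_log_mul_log {p P : ℕ} (hp : p.Prime) (hpP : p ≤ P) (hP : 4 ≤ P) :
    (p : ℝ) ≤ P / Real.log P * Real.log p := by
  have hP' : (4 : ℝ) ≤ P := by exact_mod_cast hP
  have he : Real.exp 1 ≤ 3 := Real.exp_one_lt_three.le
  have hanti : Real.log P / P ≤ Real.log p / p := by
    rcases hp.two_le.eq_or_lt with h2 | h3
    · rw [← h2]
      calc Real.log P / P ≤ Real.log 4 / 4 :=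
            Real.log_div_self_antitoneOn (by simp; linarith) (by simp; linarith) hP'
        _ = Real.log (2 : ℕ) / (2 : ℕ) := by
            rw [show (4 : ℝ) = 2 ^ 2 by norm_num, Real.log_pow]; push_cast; ring
    · have h3' : (3 : ℝ) ≤ p := by exact_mod_cast h3
      exact Real.log_div_self_antitoneOn (by simp; linarith) (by simp; linarith)
        (by exact_mod_cast hpP)
  have hp' : (2 : ℝ) ≤ p := by exact_mod_cast hp.two_le
  rw [div_le_div_iff₀ (by linarith) (by linarith)] at hanti
  rw [div_mul_eq_mul_div, le_div_iff₀ (Real.log_pos (by linarith))]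
  linarith

/-- `ellPow p k = ℓ(p ^ k)` for a prime `p`; note `ℓ(1) = 0`. -/
def ellPow (p k : ℕ) : ℕ := if k = 0 then 0 else p ^ k

/-- `ℓ(M) = ∑_{p^k ∥ M} p^k`; for `M ≥ 2` it is the least `n` such that `S_n` has an element
of order `M`. -/
def ell (M : ℕ) : ℕ := ∑ p ∈ M.primeFactors, p ^ M.factorization p

theorem two_le_pow_factorization {M p : ℕ} (hp : p ∈ M.primeFactors) :
    2 ≤ p ^ M.factorization p :=
  (Nat.prime_of_mem_primeFactors hp).two_le.trans <|
    Nat.le_self_pow (Finsupp.mem_support_iff.mp hp) p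

theorem ell_eq_sum_ellPow {M : ℕ} {s : Finset ℕ} (hs : M.primeFactors ⊆ s) :
    ell M = ∑ p ∈ s, ellPow p (M.factorization p) := by
  rw [ell, ← sum_subset hs]
  · exact sum_congr rfl fun p hp => by rw [ellPow, if_neg (Finsupp.mem_support_iff.mp hp)]
  · intro p _ hp
    rw [Finsupp.notMem_support_iff.mp hp, ellPow, if_pos rfl]

theorem ell_le_self (M : ℕ) : ell M ≤ M := by
  rcases eq_or_ne M 0 with rfl | hM
  · simp [ell]
  calc ell M ≤ ∏ p ∈ M.primeFactors, p ^ M.factorization p :=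
        sum_le_prod_of_two_le fun _ => two_le_pow_factorization
    _ = M := (Nat.prod_primeFactors_pow_factorization hM).symm

theorem ell_lcm_le {x y : ℕ} (hx : x ≠ 0) (hy : y ≠ 0) : ell (x.lcm y) ≤ ell x + ell y := by
  have hsub : (x.lcm y).primeFactors ⊆ x.primeFactors ∪ y.primeFactors := by
    rw [← Nat.primeFactors_mul hx hy]
    exact Nat.primeFactors_mono (Nat.lcm_dvd_mul x y) (mul_ne_zero hx hy)
  rw [ell_eq_sum_ellPow hsub, ell_eq_sum_ellPow subset_union_left,
    ell_eq_sum_ellPow subset_union_right, ← sum_add_distrib]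
  refine sum_le_sum fun p _ => ?_
  rw [Nat.factorization_lcm hx hy, Finsupp.sup_apply]
  rcases max_choice (x.factorization p) (y.factorization p) with h | h <;> rw [h] <;> omega

theorem ell_multiset_lcm_le (s : Multiset ℕ) (hs : 0 ∉ s) : ell s.lcm ≤ s.sum := by
  induction s using Multiset.induction_on with
  | empty => simp [ell]
  | cons a s ih =>
    rw [Multiset.mem_cons, not_or] at hs
    rw [Multiset.lcm_cons, Multiset.sum_cons]
    calc ell (a.lcm s.lcm) ≤ ell a + ell s.lcm :=
          ell_lcm_le (Ne.symm hs.1) (mt (Multiset.lcm_eq_zero_iff s).mp hs.2)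
      _ ≤ a + s.sum := add_le_add (ell_le_self a) (ih hs.2)

theorem ell_orderOf_le {α : Type*} [Fintype α] [DecidableEq α] (σ : Equiv.Perm α) :
    ell (orderOf σ) ≤ Fintype.card α := by
  rw [← σ.lcm_cycleType]
  calc ell σ.cycleType.lcm ≤ σ.cycleType.sum :=
        ell_multiset_lcm_le _ fun h => by simpa using Equiv.Perm.two_le_of_mem_cycleType h
    _ = #σ.support := σ.sum_cycleType
    _ ≤ Fintype.card α := σ.support.card_le_univ

theorem lcm_prime_pow_eq_prod {s : Finset ℕ} (hs : ∀ p ∈ s, p.Prime) (a : ℕ → ℕ) :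
    s.lcm (fun p => p ^ a p) = ∏ p ∈ s, p ^ a p :=
  lcm_eq_prod fun p hp q hq hpq =>
    Nat.Coprime.pow _ _ ((Nat.coprime_primes (hs p hp) (hs q hq)).mpr hpq)

theorem exists_perm_orderOf_eq {α : Type*} [Fintype α] [DecidableEq α] {M : ℕ} (hM : M ≠ 0)
    (h : ell M ≤ Fintype.card α) : ∃ σ : Equiv.Perm α, orderOf σ = M := by
  set m := M.primeFactors.val.map fun p => p ^ M.factorization p
  have hm : ∀ k ∈ m, 2 ≤ k := fun k hk => by
    obtain ⟨p, hp, rfl⟩ := Multiset.mem_map.mp hk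
    exact two_le_pow_factorization hp
  obtain ⟨σ, hσ⟩ := (Equiv.Perm.exists_with_cycleType_iff α (m := m)).mpr ⟨h, hm⟩
  refine ⟨σ, ?_⟩
  rw [← σ.lcm_cycleType, hσ]
  change M.primeFactors.lcm (fun p => p ^ M.factorization p) = M
  rw [lcm_prime_pow_eq_prod fun p => Nat.prime_of_mem_primeFactors,
    ← Nat.prod_primeFactors_pow_factorization hM]

theorem landau_ell_eq {N : ℕ} (hN : N ≠ 0) (hmax : ∀ M, M ≠ 0 → ell M ≤ ell N → M ≤ N) :
    landau (ell N) = N := by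
  refine le_antisymm (Finset.sup_le fun σ _ => hmax _ (orderOf_pos σ).ne' ?_) ?_
  · simpa using ell_orderOf_le σ
  · obtain ⟨σ, hσ⟩ := exists_perm_orderOf_eq (α := Fin (ell N)) hN (by simp)
    calc N = orderOf σ := hσ.symm
      _ ≤ landau (ell N) := Finset.le_sup (f := fun σ => orderOf σ) (mem_univ σ)

theorem factorization_prod_pow_apply {s : Finset ℕ} (hs : ∀ p ∈ s, p.Prime) (a : ℕ → ℕ)
    (q : ℕ) : (∏ p ∈ s, p ^ a p).factorization q = if q ∈ s then a q else 0 := by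
  rw [Nat.factorization_prod fun p hp => pow_ne_zero _ (hs p hp).ne_zero,
    Finsupp.finsetSum_apply, ← sum_ite_eq' s q a]
  exact sum_congr rfl fun p hp => by rw [(hs p hp).factorization_pow, Finsupp.single_apply]

theorem factorization_prod_pow_eq {s : Finset ℕ} (hs : ∀ p ∈ s, p.Prime) {a : ℕ → ℕ}
    (ha : ∀ p, p.Prime → p ∉ s → a p = 0) {q : ℕ} (hq : q.Prime) :
    (∏ p ∈ s, p ^ a p).factorization q = a q := by
  rw [factorization_prod_pow_apply hs]
  split_ifs with h
  · rfl
  · exact (ha q hq h).symm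

theorem ell_prod_pow {s : Finset ℕ} (hs : ∀ p ∈ s, p.Prime) {a : ℕ → ℕ}
    (ha : ∀ p ∈ s, a p ≠ 0) : ell (∏ p ∈ s, p ^ a p) = ∑ p ∈ s, p ^ a p := by
  have hsub : (∏ p ∈ s, p ^ a p).primeFactors ⊆ s := fun q hq => by
    have := Finsupp.mem_support_iff.mp (Nat.support_factorization _ ▸ hq)
    rw [factorization_prod_pow_apply hs] at this
    by_contra hqs
    exact this (if_neg hqs)
  rw [ell_eq_sum_ellPow hsub]
  refine sum_congr rfl fun p hp => ?_
  rw [factorization_prod_pow_apply hs, if_pos hp, ellPow, if_neg (ha p hp)]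

theorem ellPow_one_sub_ellPow_zero (p : ℕ) : (ellPow p 1 : ℝ) - ellPow p 0 = p := by
  simp [ellPow]

theorem ellPow_succ_sub_ellPow {p j : ℕ} (hj : j ≠ 0) :
    (ellPow p (j + 1) : ℝ) - ellPow p j = (p : ℝ) ^ (j + 1) - (p : ℝ) ^ j := by
  simp [ellPow, hj]

theorem monotone_ellPow_succ_sub {p : ℕ} (hp : 2 ≤ p) :
    Monotone fun j => (ellPow p (j + 1) : ℝ) - ellPow p j := by
  have hp' : (2 : ℝ) ≤ p := by exact_mod_cast hp
  refine monotone_nat_of_le_succ fun j => ?_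
  rcases eq_or_ne j 0 with rfl | hj
  · rw [zero_add, ellPow_one_sub_ellPow_zero, ellPow_succ_sub_ellPow one_ne_zero, pow_one, sq]
    nlinarith
  · rw [ellPow_succ_sub_ellPow hj, ellPow_succ_sub_ellPow (Nat.succ_ne_zero j),
      pow_succ _ (j + 1), pow_succ _ j]
    nlinarith [mul_nonneg (pow_pos (by linarith : (0 : ℝ) < p) j).le (sq_nonneg ((p : ℝ) - 1))]

theorem exists_lt_ellPow_succ_sub {p : ℕ} (hp : 2 ≤ p) (t : ℝ) :
    ∃ j, t < (ellPow p (j + 1) : ℝ) - ellPow p j := by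
  have hp' : (2 : ℝ) ≤ p := by exact_mod_cast hp
  obtain ⟨n, hn⟩ := pow_unbounded_of_one_lt t (by linarith : (1 : ℝ) < p)
  refine ⟨n + 1, hn.trans_le ?_⟩
  rw [ellPow_succ_sub_ellPow n.succ_ne_zero, pow_succ, pow_succ]
  nlinarith [mul_nonneg (pow_pos (by linarith : (0 : ℝ) < p) n).le
    (by nlinarith : (0 : ℝ) ≤ p * p - p - 1)]

/-- `α` is where the increasing increments `ℓ(p^(j+1)) - ℓ(p^j)` cross `ρ log p`. -/
def IsSuperchampionExponent (ρ : ℝ) (p α : ℕ) : Prop :=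
  (∀ j < α, (ellPow p (j + 1) : ℝ) - ellPow p j ≤ ρ * Real.log p) ∧
    ρ * Real.log p ≤ (ellPow p (α + 1) : ℝ) - ellPow p α

theorem isSuperchampionExponent_zero {p P : ℕ} (hP : Real.exp 1 ≤ P) (hPp : P ≤ p) :
    IsSuperchampionExponent (P / Real.log P) p 0 := by
  refine ⟨by simp, ?_⟩
  rw [zero_add, ellPow_one_sub_ellPow_zero]
  exact div_log_mul_log_le hP (by exact_mod_cast hPp)

theorem isSuperchampionExponent_of_cases {p : ℕ} (hp : p.Prime) {ρ : ℝ} {α : ℕ}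
    (hpρ : (p : ℝ) ≤ ρ * Real.log p)
    (h1 : ρ < ((p : ℝ) ^ 2 - p) / Real.log p → α = 1)
    (h2 : ∀ i : ℕ, 2 ≤ i → ((p : ℝ) ^ i - (p : ℝ) ^ (i - 1)) / Real.log p ≤ ρ →
      ρ < ((p : ℝ) ^ (i + 1) - (p : ℝ) ^ i) / Real.log p → α = i) :
    α ≠ 0 ∧ IsSuperchampionExponent ρ p α := by
  classical
  have hlog : 0 < Real.log p := Real.log_pos (by exact_mod_cast hp.one_lt)
  have hex := exists_lt_ellPow_succ_sub hp.two_le (ρ * Real.log p)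
  set i := Nat.find hex
  have hi : ρ * Real.log p < (ellPow p (i + 1) : ℝ) - ellPow p i := Nat.find_spec hex
  have hmin : ∀ j < i, (ellPow p (j + 1) : ℝ) - ellPow p j ≤ ρ * Real.log p :=
    fun j hj => not_lt.mp (Nat.find_min hex hj)
  have hi0 : i ≠ 0 := by
    rintro h
    rw [h, zero_add, ellPow_one_sub_ellPow_zero] at hi
    exact hi.not_ge hpρ
  suffices α = i by exact this ▸ ⟨hi0, hmin, hi.le⟩
  rcases (Nat.one_le_iff_ne_zero.mpr hi0).eq_or_lt with h | h
  · rw [← h, ellPow_succ_sub_ellPow one_ne_zero] at hi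
    rw [← h]
    exact h1 ((lt_div_iff₀ hlog).mpr (by simpa using hi))
  · have hprev := hmin (i - 1) (by omega)
    rw [ellPow_succ_sub_ellPow (by omega), Nat.sub_add_cancel h.le] at hprev
    rw [ellPow_succ_sub_ellPow hi0] at hi
    exact h2 i h ((div_le_iff₀ hlog).mpr hprev) ((lt_div_iff₀ hlog).mpr hi)

/-- Each `p ^ v_p(N)` maximizes `ρ k log p - ℓ(p^k)`, so `N` maximizes `ρ log M - ℓ(M)`. -/
theorem le_of_ell_le {M N : ℕ} (hM : M ≠ 0) (hN : N ≠ 0) {ρ : ℝ} (hρ : 0 < ρ)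
    (hexp : ∀ p : ℕ, p.Prime → IsSuperchampionExponent ρ p (N.factorization p))
    (hell : ell M ≤ ell N) : M ≤ N := by
  have hsum {K : ℕ} {s : Finset ℕ} (hs : K.primeFactors ⊆ s) : ρ * Real.log K - ell K =
      ∑ p ∈ s, (ρ * Real.log p * K.factorization p - ellPow p (K.factorization p)) := by
    rw [Real.log_nat_eq_sum_factorization, Finsupp.sum_of_support_subset (s := s) _ hs _ (by simp),
      ell_eq_sum_ellPow hs, mul_sum, Nat.cast_sum, ← sum_sub_distrib]
    exact sum_congr rfl fun p _ => by ring
  have hgain : ρ * Real.log M - ell M ≤ ρ * Real.log N - ell N := by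
    rw [hsum (subset_union_left (s₂ := N.primeFactors)),
      hsum (subset_union_right (s₁ := M.primeFactors))]
    refine sum_le_sum fun p hp => ?_
    have hp : p.Prime := by
      rcases mem_union.mp hp with h | h <;> exact Nat.prime_of_mem_primeFactors h
    exact mul_sub_le_of_bracket (c := fun k => (ellPow p k : ℝ))
      (monotone_ellPow_succ_sub hp.two_le) (hexp p hp).1 (hexp p hp).2 _
  have hlog : Real.log M ≤ Real.log N := by
    have : (ell M : ℝ) ≤ ell N := by exact_mod_cast hell
    exact le_of_mul_le_mul_left (by linarith) hρ
  exact_mod_cast (Real.log_le_log_iff (by positivity) (by positivity)).mp hlog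

/-- If `x = p^α > P`, the hypothesis at `j = α - 1` reads `(1 - 1/p) x log P ≤ P log p`; since
`α (1 - 1/p) ≥ 1` this gives `log P / P ≤ log x / x`, against the strict decrease of `log x / x`. -/
theorem pow_le_of_ellPow_succ_sub_le {p P α : ℕ} (hp : p.Prime) (hpP : p ≤ P) (hP : 3 ≤ P)
    (hα : α ≠ 0)
    (h : ∀ j < α, (ellPow p (j + 1) : ℝ) - ellPow p j ≤ P / Real.log P * Real.log p) :
    p ^ α ≤ P := by
  obtain ⟨k, rfl | rfl⟩ : ∃ k, α = 1 ∨ α = k + 2 := ⟨α - 2, by omega⟩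
  · simpa using hpP
  by_contra! hlt
  have hp' : (2 : ℝ) ≤ p := by exact_mod_cast hp.two_le
  have hP' : Real.exp 1 ≤ P := Real.exp_one_lt_three.le.trans (by exact_mod_cast hP)
  have hlogP : 0 < Real.log P := Real.log_pos (by linarith [Real.add_one_le_exp 1])
  have hPx : (P : ℝ) < (p : ℝ) ^ (k + 2) := by exact_mod_cast hlt
  have hstep : ((p : ℝ) ^ (k + 2) - (p : ℝ) ^ (k + 1)) * Real.log P ≤ P * Real.log p := by
    have := h (k + 1) (by omega)
    rwa [ellPow_succ_sub_ellPow k.succ_ne_zero, div_mul_eq_mul_div, le_div_iff₀ hlogP] at this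
  have hgrowth : (p : ℝ) ^ (k + 2) ≤ (k + 2) * ((p : ℝ) ^ (k + 2) - (p : ℝ) ^ (k + 1)) := by
    have hcoef : (p : ℝ) ≤ (k + 2) * (p - 1) := by nlinarith [k.cast_nonneg (α := ℝ)]
    have := mul_le_mul_of_nonneg_left hcoef (pow_pos (by linarith : (0 : ℝ) < p) (k + 1)).le
    rw [pow_succ _ (k + 1)]
    linarith
  have hmono : Real.log P / P ≤ Real.log ((p : ℝ) ^ (k + 2)) / (p : ℝ) ^ (k + 2) := by
    rw [div_le_div_iff₀ (by linarith [Real.exp_pos 1]) (by positivity), Real.log_pow]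
    push_cast
    calc Real.log P * (p : ℝ) ^ (k + 2)
        ≤ Real.log P * ((k + 2) * ((p : ℝ) ^ (k + 2) - (p : ℝ) ^ (k + 1))) := by gcongr
      _ = (k + 2) * (((p : ℝ) ^ (k + 2) - (p : ℝ) ^ (k + 1)) * Real.log P) := by ring
      _ ≤ (k + 2) * (P * Real.log p) := by gcongr
      _ = (k + 2) * Real.log p * P := by ring
  exact (strictAntiOn_log_div_self hP' (hP'.trans hPx.le) hPx).not_ge hmono

theorem chebTheta_eq_log_primorial (x : ℝ) : chebTheta x = Real.log (primorial ⌊x⌋₊) := by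
  rw [chebTheta, primorial, Nat.cast_prod,
    Real.log_prod fun p hp => by exact_mod_cast (mem_filter.mp hp).2.ne_zero]

theorem chebPsi_natCast (n : ℕ) : chebPsi n = Real.log (Nat.lcmUpto n) := by
  rw [← Chebyshev.psi_eq_log_lcmUpto, Chebyshev.psi_eq_sum_Icc, chebPsi, Nat.range_succ_eq_Icc_zero]

theorem prod_pow_dvd_lcmUpto {s : Finset ℕ} (hs : ∀ p ∈ s, p.Prime) {a : ℕ → ℕ} {n : ℕ}
    (h : ∀ p ∈ s, p ^ a p ≤ n) : ∏ p ∈ s, p ^ a p ∣ Nat.lcmUpto n := by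
  rw [← lcm_prime_pow_eq_prod hs]
  exact Finset.lcm_dvd fun p hp => Finset.dvd_lcm (f := id)
    (mem_Icc.mpr ⟨Nat.one_le_pow _ _ (hs p hp).pos, h p hp⟩)

theorem log_le_log_of_dvd {m n : ℕ} (h : m ∣ n) (hn : n ≠ 0) : Real.log m ≤ Real.log n := by
  have hm : m ≠ 0 := by rintro rfl; exact hn (zero_dvd_iff.mp h)
  exact Real.log_le_log (by positivity) (by exact_mod_cast Nat.le_of_dvd (Nat.pos_of_ne_zero hn) h)

theorem stmt19_general (P : ℕ) (hP5 : 5 ≤ P) (a : ℕ → ℕ)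
    (h0 : ∀ p : ℕ, p.Prime → P < p → a p = 0)
    (h1 : ∀ p : ℕ, p.Prime → p ≤ P →
      (P : ℝ) / Real.log P < ((p : ℝ) ^ 2 - (p : ℝ)) / Real.log p → a p = 1)
    (h2 : ∀ p : ℕ, p.Prime → p ≤ P → ∀ i : ℕ, 2 ≤ i →
      ((p : ℝ) ^ i - (p : ℝ) ^ (i - 1)) / Real.log p ≤ (P : ℝ) / Real.log P →
      (P : ℝ) / Real.log P < ((p : ℝ) ^ (i + 1) - (p : ℝ) ^ i) / Real.log p → a p = i) :
    landau (∑ p ∈ Finset.filter Nat.Prime (Finset.range (P + 1)), p ^ a p) =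
      ∏ p ∈ Finset.filter Nat.Prime (Finset.range (P + 1)), p ^ a p ∧
    chebTheta (P : ℝ) ≤
      Real.log (∏ p ∈ Finset.filter Nat.Prime (Finset.range (P + 1)), p ^ a p) ∧
    Real.log (∏ p ∈ Finset.filter Nat.Prime (Finset.range (P + 1)), p ^ a p) ≤
      chebPsi (P : ℝ) := by
  set primes := filter Nat.Prime (range (P + 1))
  have mem_primes {p : ℕ} : p ∈ primes ↔ p.Prime ∧ p ≤ P := by simp [primes, and_comm]
  have hprime : ∀ p ∈ primes, p.Prime := fun p hp => (mem_primes.mp hp).1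
  have hP : Real.exp 1 ≤ P := Real.exp_one_lt_three.le.trans (by exact_mod_cast (by omega : 3 ≤ P))
  have hsmall : ∀ p ∈ primes, a p ≠ 0 ∧ IsSuperchampionExponent (P / Real.log P) p (a p) :=
    fun p hp => have ⟨hp, hpP⟩ := mem_primes.mp hp
      isSuperchampionExponent_of_cases hp (natCast_le_div_log_mul_log hp hpP (by omega))
        (h1 p hp hpP) (h2 p hp hpP)
  have hlt (p : ℕ) (hp : p.Prime) (hp' : p ∉ primes) : P < p :=
    not_le.mp fun hpP => hp' (mem_primes.mpr ⟨hp, hpP⟩)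
  have hN : ∏ p ∈ primes, p ^ a p ≠ 0 :=
    prod_ne_zero_iff.mpr fun p hp => pow_ne_zero _ (hprime p hp).ne_zero
  have hρ : 0 < (P : ℝ) / Real.log P :=
    div_pos (by positivity) (Real.log_pos (by exact_mod_cast (by omega : 1 < P)))
  refine ⟨?_, ?_, ?_⟩
  · rw [← ell_prod_pow hprime fun p hp => (hsmall p hp).1]
    refine landau_ell_eq hN fun M hM hle => le_of_ell_le hM hN hρ (fun p hp => ?_) hle
    rw [factorization_prod_pow_eq hprime (fun p hp hp' => h0 p hp (hlt p hp hp')) hp]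
    by_cases hp' : p ∈ primes
    · exact (hsmall p hp').2
    · exact h0 p hp (hlt p hp hp') ▸ isSuperchampionExponent_zero hP (hlt p hp hp').le
  · rw [chebTheta_eq_log_primorial, Nat.floor_natCast]
    exact_mod_cast log_le_log_of_dvd
      (prod_dvd_prod_of_dvd _ _ fun p hp => dvd_pow_self p (hsmall p hp).1) hN
  · rw [chebPsi_natCast]
    refine mod_cast log_le_log_of_dvd (prod_pow_dvd_lcmUpto hprime fun p hp => ?_)
      (Nat.lcmUpto_ne_zero P)
    obtain ⟨hp', hpP⟩ := mem_primes.mp hp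
    exact pow_le_of_ellPow_succ_sub_le hp' hpP (by omega) (hsmall p hp).1 (hsmall p hp).2.1

/-- For a prime P ≥ 5 and ρ = P/log P, with the exponents α_p as in the definition of
the ℓ-superchampion N_P = ∏_{p ≤ P} p^{α_p} and n_P = Σ_{p ≤ P} p^{α_p}, one has
g(n_P) = N_P and θ(P) ≤ log N_P ≤ ψ(P). -/
theorem stmt19 (P : ℕ) (hP : P.Prime) (hP5 : 5 ≤ P) (a : ℕ → ℕ)
    (h0 : ∀ p : ℕ, p.Prime → P < p → a p = 0)
    (h1 : ∀ p : ℕ, p.Prime → p ≤ P →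
      (P : ℝ) / Real.log P < ((p : ℝ) ^ 2 - (p : ℝ)) / Real.log p → a p = 1)
    (h2 : ∀ p : ℕ, p.Prime → p ≤ P → ∀ i : ℕ, 2 ≤ i →
      ((p : ℝ) ^ i - (p : ℝ) ^ (i - 1)) / Real.log p ≤ (P : ℝ) / Real.log P →
      (P : ℝ) / Real.log P < ((p : ℝ) ^ (i + 1) - (p : ℝ) ^ i) / Real.log p → a p = i) :
    landau (∑ p ∈ Finset.filter Nat.Prime (Finset.range (P + 1)), p ^ a p) =
      ∏ p ∈ Finset.filter Nat.Prime (Finset.range (P + 1)), p ^ a p ∧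
    chebTheta (P : ℝ) ≤
      Real.log (∏ p ∈ Finset.filter Nat.Prime (Finset.range (P + 1)), p ^ a p) ∧
    Real.log (∏ p ∈ Finset.filter Nat.Prime (Finset.range (P + 1)), p ^ a p) ≤
      chebPsi (P : ℝ) :=
  stmt19_general P hP5 a h0 h1 h2
end
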